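/- Let V ∈ R^{p×r} have at most s nonzero rows and let W ∈ R^{p×r} be arbitrary. Let s ≤ s' ≤ p and W̄ = HT(W, s'). Then dist²(V, W̄) ≤ (1 + 2√(s/s') (1 + √(s/s'))) · dist²(V, W). -/

import Mathlib

open MeasureTheory ProbabilityTheory Matrix Real
open scoped Classical

noncomputable section

/-- Frobenius norm of a real matrix. -/
def frob {m n : ℕ} (M : Matrix (Fin m) (Fin n) ℝ) : ℝ :=
  Real.sqrt (∑ i, ∑ j, (M i j) ^ 2)

/-- Distance between `p × r` matrices modulo right multiplication by an orthogonal matrix: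
`dist(U,V) = min_{P ∈ O(r)} ‖U P - V‖_F`. -/
def gdist {p r : ℕ} (U V : Matrix (Fin p) (Fin r) ℝ) : ℝ :=
  sInf {x : ℝ | ∃ P : Matrix (Fin r) (Fin r) ℝ, Pᵀ * P = 1 ∧ x = frob (U * P - V)}

/-- Centered multivariate Gaussian with covariance `S`, as the law of `S^{1/2} z` for a
standard Gaussian vector `z`. -/
def mvGaussian {m : ℕ} (S : Matrix (Fin m) (Fin m) ℝ) : Measure (Fin m → ℝ) :=
  if h : S.PosSemidef then
    (Measure.pi fun _ : Fin m => gaussianReal 0 1).map fun z => ((((h.1.eigenvectorUnitary : Matrix (Fin m) (Fin m) ℝ) * diagonal (Real.sqrt ∘ h.1.eigenvalues) *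
      (star h.1.eigenvectorUnitary : Matrix (Fin m) (Fin m) ℝ)))).mulVec z
  else 0

/-- Law of `n` i.i.d. samples from `N_m(0, S)`. -/
def iidLaw (n : ℕ) {m : ℕ} (S : Matrix (Fin m) (Fin m) ℝ) : Measure (Fin n → Fin m → ℝ) :=
  Measure.pi fun _ : Fin n => mvGaussian S

def sampleMean {n m : ℕ} (X : Fin n → Fin m → ℝ) (i : Fin m) : ℝ := (∑ t, X t i) / n

/-- Sample covariance matrix. -/
def sampleCov {n m : ℕ} (X : Fin n → Fin m → ℝ) : Matrix (Fin m) (Fin m) ℝ :=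
  Matrix.of fun i j => (∑ t, (X t i - sampleMean X i) * (X t j - sampleMean X j)) / n

/-- Block-diagonal part of a matrix with respect to block labels `β`. -/
def blockPart {m k : ℕ} (β : Fin m → Fin k) (M : Matrix (Fin m) (Fin m) ℝ) :
    Matrix (Fin m) (Fin m) ℝ :=
  Matrix.of fun i j => if β i = β j then M i j else 0

/-- Rows of `M` belonging to block `i`, all other rows zeroed out. -/
def restrictRows {m k c : ℕ} (β : Fin m → Fin k) (i : Fin k) (M : Matrix (Fin m) (Fin c) ℝ) :
    Matrix (Fin m) (Fin c) ℝ :=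
  Matrix.of fun a b => if β a = i then M a b else 0

/-- ℓ₂ norm of row `i` of `M`. -/
def rowNorm {m r : ℕ} (M : Matrix (Fin m) (Fin r) ℝ) (i : Fin m) : ℝ :=
  Real.sqrt (∑ j, (M i j) ^ 2)

/-- Set of indices of nonzero rows. -/
def rowSupport {m r : ℕ} (M : Matrix (Fin m) (Fin r) ℝ) : Set (Fin m) := {i | M i ≠ 0}

/-- `W'` is the hard thresholding of `W` keeping the `k` rows of largest ℓ₂ norm
(ties broken toward smaller indices). -/
def IsHT {m r : ℕ} (W : Matrix (Fin m) (Fin r) ℝ) (k : ℕ) (W' : Matrix (Fin m) (Fin r) ℝ) : Prop :=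
  ∃ C : Finset (Fin m), C.card = min k m ∧ (∀ i ∈ C, W' i = W i) ∧ (∀ i ∉ C, W' i = 0) ∧
    ∀ i ∈ C, ∀ j ∉ C, rowNorm W j < rowNorm W i ∨ (rowNorm W j = rowNorm W i ∧ i < j)

/-- Positive semidefinite square root (junk value `0` if not psd). -/
def psqrt {r : ℕ} (M : Matrix (Fin r) (Fin r) ℝ) : Matrix (Fin r) (Fin r) ℝ :=
  if h : M.PosSemidef then (((h.1.eigenvectorUnitary : Matrix (Fin r) (Fin r) ℝ) * diagonal (Real.sqrt ∘ h.1.eigenvalues) *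
      (star h.1.eigenvectorUnitary : Matrix (Fin r) (Fin r) ℝ))) else 0

/-- Inverse square root. -/
def invSqrt {r : ℕ} (M : Matrix (Fin r) (Fin r) ℝ) : Matrix (Fin r) (Fin r) ℝ := (psqrt M)⁻¹

/-- Nuclear norm `Tr √(Mᵀ M)`. -/
def nucNorm {a b : ℕ} (M : Matrix (Fin a) (Fin b) ℝ) : ℝ := (psqrt (Mᵀ * M)).trace

/-- Entrywise ℓ₁ norm. -/
def l1Norm {a b : ℕ} (M : Matrix (Fin a) (Fin b) ℝ) : ℝ := ∑ i, ∑ j, |M i j|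

/-- Entrywise sup norm. -/
def maxAbs {a b : ℕ} (M : Matrix (Fin a) (Fin b) ℝ) : ℝ := sSup {x : ℝ | ∃ i j, x = |M i j|}

/-- Membership in the Fantope `{X : 0 ⪯ X ⪯ I, Tr X = r}`. -/
def InFantope {p : ℕ} (r : ℕ) (X : Matrix (Fin p) (Fin p) ℝ) : Prop :=
  X.PosSemidef ∧ (1 - X).PosSemidef ∧ X.trace = (r : ℝ)

/-- `F` minimizes `-⟨Sh, ·⟩ + ρ ‖·‖_1` over symmetric matrices whose conjugation by
`S0h^{1/2}` lies in the Fantope. -/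
def IsFantopeMin {p : ℕ} (r : ℕ) (Sh S0h : Matrix (Fin p) (Fin p) ℝ) (ρ : ℝ)
    (F : Matrix (Fin p) (Fin p) ℝ) : Prop :=
  F.IsSymm ∧ InFantope r (psqrt S0h * F * psqrt S0h) ∧
    ∀ G : Matrix (Fin p) (Fin p) ℝ, G.IsSymm → InFantope r (psqrt S0h * G * psqrt S0h) →
      -(Shᵀ * F).trace + ρ * l1Norm F ≤ -(Shᵀ * G).trace + ρ * l1Norm G

/-- `L` maximizes `⟨Sh, L Lᵀ⟩` subject to `Lᵀ S0h L = I_r` and row support inside `I`. -/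
def IsRestrictedMax {p r : ℕ} (Sh S0h : Matrix (Fin p) (Fin p) ℝ) (I : Finset (Fin p))
    (L : Matrix (Fin p) (Fin r) ℝ) : Prop :=
  Lᵀ * S0h * L = 1 ∧ (∀ i ∉ I, L i = 0) ∧
    ∀ L' : Matrix (Fin p) (Fin r) ℝ, L'ᵀ * S0h * L' = 1 → (∀ i ∉ I, L' i = 0) →
      (Shᵀ * (L' * L'ᵀ)).trace ≤ (Shᵀ * (L * Lᵀ)).trace

/-- Kullback–Leibler divergence `∫ log (dP/dQ) dP`. -/
def klDivR {α : Type*} [MeasurableSpace α] (P Q : Measure α) : ℝ :=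
  ∫ x, Real.log (P.rnDeriv Q x).toReal ∂P


/-!
Replacing `V` by `V P` for an orthogonal `P` keeps at most `s` nonzero rows, so it suffices to
bound `‖V - W̄‖_F` for one `V`. Let `S` be the row support of `V`, `C` the `s'` rows kept, and
`Δ = V - W`. Then `‖V - W̄‖² = ‖Δ_C‖² + ‖V_{S∖C}‖²` with `‖V_{S∖C}‖ ≤ ‖W_{S∖C}‖ + ‖Δ_{S∖C}‖`.
Every row of `W` in `S ∖ C` is shorter than every row in `C ∖ S`, where `W = -Δ`; as
`|S ∖ C| ≤ s - |S ∩ C|` and `|C ∖ S| = s' - |S ∩ C|`, averaging gives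
`‖W_{S∖C}‖² ≤ (s/s') ‖Δ‖²`, whence `‖V - W̄‖ ≤ (1 + √(s/s')) ‖V - W‖`.
-/

open Finset

section Sums

variable {ι : Type*}

theorem sum_add_sq_le (T : Finset ι) (f g : ι → ℝ) :
    ∑ i ∈ T, (f i + g i) ^ 2 ≤
      ∑ i ∈ T, f i ^ 2 + 2 * (√(∑ i ∈ T, f i ^ 2) * √(∑ i ∈ T, g i ^ 2)) + ∑ i ∈ T, g i ^ 2 := by
  have hexpand : ∑ i ∈ T, (f i + g i) ^ 2 =
      ∑ i ∈ T, f i ^ 2 + 2 * ∑ i ∈ T, f i * g i + ∑ i ∈ T, g i ^ 2 := by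
    simp only [add_sq, sum_add_distrib, mul_sum, mul_assoc]
  rw [hexpand]
  gcongr
  exact Real.sum_mul_le_sqrt_mul_sqrt T f g

theorem card_mul_sum_le_card_mul_sum (a : ι → ℝ) {T U : Finset ι}
    (h : ∀ i ∈ T, ∀ j ∈ U, a i ≤ a j) :
    (#U : ℝ) * ∑ i ∈ T, a i ≤ #T * ∑ j ∈ U, a j :=
  calc (#U : ℝ) * ∑ i ∈ T, a i = ∑ i ∈ T, ∑ _j ∈ U, a i := by
        rw [mul_sum]; simp only [sum_const, nsmul_eq_mul]
    _ ≤ ∑ _i ∈ T, ∑ j ∈ U, a j := sum_le_sum fun i hi => sum_le_sum fun j hj => h i hi j hj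
    _ = #T * ∑ j ∈ U, a j := by rw [sum_const, nsmul_eq_mul]

theorem sum_sdiff_le_card_div_card_mul_sum_sdiff [DecidableEq ι] {a : ι → ℝ} (ha : ∀ i, 0 ≤ a i)
    {S C : Finset ι} (hSC : #S ≤ #C) (h : ∀ i ∈ S \ C, ∀ j ∈ C \ S, a i ≤ a j) :
    ∑ i ∈ S \ C, a i ≤ (#S / #C : ℝ) * ∑ j ∈ C \ S, a j := by
  set A := ∑ i ∈ S \ C, a i
  set E := ∑ j ∈ C \ S, a j
  have hA : 0 ≤ A := sum_nonneg fun i _ => ha i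
  have hE : 0 ≤ E := sum_nonneg fun j _ => ha j
  rcases (S \ C).eq_empty_or_nonempty with hT | hT
  · simp only [A, hT, sum_empty]
    positivity
  have hcount := card_mul_sum_le_card_mul_sum a h
  have hS : (#(S \ C) : ℝ) + #(S ∩ C) = #S := by exact_mod_cast card_sdiff_add_card_inter S C
  have hC : (#(C \ S) : ℝ) + #(S ∩ C) = #C := by
    rw [inter_comm]; exact_mod_cast card_sdiff_add_card_inter C S
  have hSC' : (#S : ℝ) ≤ #C := by exact_mod_cast hSC
  have hT1 : (1 : ℝ) ≤ #(S \ C) := by exact_mod_cast hT.card_pos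
  have hAE : A ≤ E := by nlinarith
  rw [div_mul_eq_mul_div, le_div_iff₀ (by linarith)]
  nlinarith

end Sums

section RowNorms

variable {m r : ℕ}

theorem rowNorm_nonneg (M : Matrix (Fin m) (Fin r) ℝ) (i : Fin m) : 0 ≤ rowNorm M i :=
  Real.sqrt_nonneg _

theorem rowNorm_eq_norm (M : Matrix (Fin m) (Fin r) ℝ) (i : Fin m) :
    rowNorm M i = ‖(WithLp.toLp 2 (M i) : EuclideanSpace ℝ (Fin r))‖ := by
  simp [rowNorm, EuclideanSpace.norm_eq]

theorem rowNorm_le_add_rowNorm_sub (V W : Matrix (Fin m) (Fin r) ℝ) (i : Fin m) :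
    rowNorm V i ≤ rowNorm W i + rowNorm (V - W) i := by
  simp only [rowNorm_eq_norm]
  exact norm_le_norm_add_norm_sub' _ _

theorem frob_nonneg (M : Matrix (Fin m) (Fin r) ℝ) : 0 ≤ frob M :=
  Real.sqrt_nonneg _

theorem frob_sq_eq_sum_rowNorm_sq (M : Matrix (Fin m) (Fin r) ℝ) :
    frob M ^ 2 = ∑ i, rowNorm M i ^ 2 := by
  rw [frob, Real.sq_sqrt (by positivity)]
  exact sum_congr rfl fun i _ => (Real.sq_sqrt (by positivity)).symm

theorem rowSupport_mul_subset {n : ℕ} (V : Matrix (Fin m) (Fin r) ℝ)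
    (P : Matrix (Fin r) (Fin n) ℝ) :
    rowSupport (V * P) ⊆ rowSupport V := by
  intro i hVP hV
  exact hVP (funext fun j => by simp [Matrix.mul_apply, hV])

end RowNorms

theorem gdist_nonneg {p r : ℕ} (U V : Matrix (Fin p) (Fin r) ℝ) : 0 ≤ gdist U V :=
  Real.sInf_nonneg <| by rintro _ ⟨P, _, rfl⟩; exact frob_nonneg _

theorem gdist_sq_le_of_forall {p r : ℕ} {U X Y : Matrix (Fin p) (Fin r) ℝ} {K : ℝ}
    (hK : 0 ≤ K)
    (h : ∀ P : Matrix (Fin r) (Fin r) ℝ, Pᵀ * P = 1 →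
      frob (U * P - X) ^ 2 ≤ K * frob (U * P - Y) ^ 2) :
    gdist U X ^ 2 ≤ K * gdist U Y ^ 2 := by
  have hle : gdist U X ≤ √K * gdist U Y := by
    rw [gdist, gdist, ← smul_eq_mul, ← Real.sInf_smul_of_nonneg (Real.sqrt_nonneg K)]
    refine le_csInf ⟨_, Set.smul_mem_smul_set ⟨1, by simp, rfl⟩⟩ ?_
    rintro _ ⟨_, ⟨P, hP, rfl⟩, rfl⟩
    calc gdist U X ≤ frob (U * P - X) :=
          csInf_le ⟨0, by rintro _ ⟨Q, _, rfl⟩; exact frob_nonneg _⟩ ⟨P, hP, rfl⟩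
      _ = √(frob (U * P - X) ^ 2) := (Real.sqrt_sq (frob_nonneg _)).symm
      _ ≤ √(K * frob (U * P - Y) ^ 2) := Real.sqrt_le_sqrt (h P hP)
      _ = √K • frob (U * P - Y) := by
          rw [Real.sqrt_mul hK, Real.sqrt_sq (frob_nonneg _), smul_eq_mul]
  calc gdist U X ^ 2 ≤ (√K * gdist U Y) ^ 2 := pow_le_pow_left₀ (gdist_nonneg U X) hle 2
    _ = K * gdist U Y ^ 2 := by rw [mul_pow, Real.sq_sqrt hK]

section HardThresholding

variable {p r : ℕ} {V W Wb : Matrix (Fin p) (Fin r) ℝ} {S C : Finset (Fin p)}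

theorem frob_sub_sq_eq_of_rows (hVS : ∀ i ∉ S, V i = 0) (hWbC : ∀ i ∈ C, Wb i = W i)
    (hWbCc : ∀ i ∉ C, Wb i = 0) :
    frob (V - Wb) ^ 2 = ∑ i ∈ C, rowNorm (V - W) i ^ 2 + ∑ i ∈ S \ C, rowNorm V i ^ 2 := by
  rw [frob_sq_eq_sum_rowNorm_sq, ← sum_add_sum_compl C]
  congr 1
  · exact sum_congr rfl fun i hi => by simp [rowNorm, hWbC i hi]
  · rw [sdiff_eq_inter_compl, inter_comm]
    refine (sum_congr rfl fun i hi => ?_).trans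
      (sum_subset inter_subset_left fun i hi hiS => ?_).symm
    · simp [rowNorm, hWbCc i (mem_compl.mp hi)]
    · simp [rowNorm, hVS i fun h => hiS (mem_inter.mpr ⟨hi, h⟩)]

theorem sum_sdiff_rowNorm_sq_le (hVS : ∀ i ∉ S, V i = 0) (hSC : #S ≤ #C)
    (hC : ∀ i ∈ C, ∀ j ∉ C, rowNorm W j ≤ rowNorm W i) :
    ∑ i ∈ S \ C, rowNorm W i ^ 2 ≤ (#S / #C : ℝ) * frob (V - W) ^ 2 := by
  have hdom : ∀ i ∈ S \ C, ∀ j ∈ C \ S, rowNorm W i ^ 2 ≤ rowNorm W j ^ 2 :=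
    fun i hi j hj =>
      pow_le_pow_left₀ (rowNorm_nonneg W i) (hC j (mem_sdiff.mp hj).1 i (mem_sdiff.mp hi).2) 2
  -- off the support of `V`, the rows of `W` are those of `W - V`
  have hCS : ∑ j ∈ C \ S, rowNorm W j ^ 2 ≤ frob (V - W) ^ 2 := by
    rw [frob_sq_eq_sum_rowNorm_sq]
    refine (sum_congr rfl fun j hj => ?_).trans_le
      (sum_le_sum_of_subset_of_nonneg (subset_univ (C \ S)) fun i _ _ => by positivity)
    simp [rowNorm, hVS j (mem_sdiff.mp hj).2]
  calc _ ≤ (#S / #C : ℝ) * ∑ j ∈ C \ S, rowNorm W j ^ 2 :=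
        sum_sdiff_le_card_div_card_mul_sum_sdiff (fun i => by positivity) hSC hdom
    _ ≤ _ := by gcongr

theorem frob_sub_sq_le_of_isHT {s s' : ℕ} (hss' : s ≤ s') (hs'p : s' ≤ p)
    (hVs : (rowSupport V).ncard ≤ s) (hWb : IsHT W s' Wb) :
    frob (V - Wb) ^ 2 ≤ (1 + √(s / s' : ℝ)) ^ 2 * frob (V - W) ^ 2 := by
  obtain ⟨C, hCcard, hWbC, hWbCc, hCmax⟩ := hWb
  rw [min_eq_left hs'p] at hCcard
  have hC : ∀ i ∈ C, ∀ j ∉ C, rowNorm W j ≤ rowNorm W i := fun i hi j hj =>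
    (hCmax i hi j hj).elim le_of_lt fun h => h.1.le
  set S := (rowSupport V).toFinset
  have hVS : ∀ i ∉ S, V i = 0 := fun i hi => not_not.mp fun hV => hi (Set.mem_toFinset.mpr hV)
  have hScard : #S ≤ s := by rwa [← Set.ncard_eq_toFinset_card']
  set ρ : ℝ := s / s'
  set D := frob (V - W) ^ 2
  set A := ∑ i ∈ S \ C, rowNorm W i ^ 2
  set B := ∑ i ∈ S \ C, rowNorm (V - W) i ^ 2
  have hAD : A ≤ ρ * D :=
    (sum_sdiff_rowNorm_sq_le hVS (hCcard ▸ hScard.trans hss') hC).trans <| by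
      rw [hCcard]
      gcongr ?_ * _
      exact div_le_div_of_nonneg_right (Nat.cast_le.mpr hScard) (Nat.cast_nonneg _)
  have hVT : ∑ i ∈ S \ C, rowNorm V i ^ 2 ≤ A + 2 * (√A * √B) + B :=
    (sum_le_sum fun i _ => pow_le_pow_left₀ (rowNorm_nonneg V i)
      (rowNorm_le_add_rowNorm_sub V W i) 2).trans (sum_add_sq_le _ _ _)
  have hCB : ∑ i ∈ C, rowNorm (V - W) i ^ 2 + B ≤ D := by
    rw [← sum_union disjoint_sdiff]
    exact (sum_le_sum_of_subset_of_nonneg (subset_univ _) fun i _ _ => by positivity).trans_eq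
      (frob_sq_eq_sum_rowNorm_sq _).symm
  have hD0 : 0 ≤ D := by positivity
  have hAB : √A * √B ≤ √ρ * D :=
    calc √A * √B ≤ √(ρ * D) * √D := by
          gcongr
          linarith [sum_nonneg fun i (_ : i ∈ C) => sq_nonneg (rowNorm (V - W) i)]
      _ = √ρ * D := by rw [Real.sqrt_mul (by positivity), mul_assoc, Real.mul_self_sqrt hD0]
  rw [frob_sub_sq_eq_of_rows hVS hWbC hWbCc]
  nlinarith [Real.sq_sqrt (by positivity : 0 ≤ ρ)]

end HardThresholding

/-- the effect of hard thresholding on the rotation-invariant distance. -/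
theorem statement10
    (p r s s' : ℕ) (hss' : s ≤ s') (hs'p : s' ≤ p)
    (V W Wb : Matrix (Fin p) (Fin r) ℝ)
    (hVs : (rowSupport V).ncard ≤ s)
    (hWb : IsHT W s' Wb) :
    gdist V Wb ^ 2 ≤
      (1 + 2 * Real.sqrt ((s : ℝ) / s') * (1 + Real.sqrt ((s : ℝ) / s'))) * gdist V W ^ 2 := by
  refine gdist_sq_le_of_forall (by positivity) fun P _ => ?_
  calc frob (V * P - Wb) ^ 2 ≤ (1 + √(s / s' : ℝ)) ^ 2 * frob (V * P - W) ^ 2 :=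
        frob_sub_sq_le_of_isHT hss' hs'p
          ((Set.ncard_le_ncard (rowSupport_mul_subset V P)).trans hVs) hWb
    _ ≤ _ := by gcongr; nlinarith [Real.sqrt_nonneg (s / s' : ℝ)]

end
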